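/- arXiv:2010.04647 — 2 statements merged into one kernel-verified Lean document; each statement's English description precedes it below -/
import Mathlib

section
/- (Deterministic core of Theorem 4.1, classification bound in Semi-DA.) Let h ∈ H, let n, m be positive reals, and suppose the deviation bounds ε_S(h) ≤ ε̂_S(h) + C_S and ε_T(h) ≤ ε̂_T(h) + C_T hold for constants C_S, C_T ≥ 0, where ε̂_S(h) := ∫ |h(z) − y| dμ̂_S(z,y) and ε̂_T(h) := ∫ |h(z) − y| dμ̂_T(z,y) are risks under empirical measures μ̂_S, μ̂_T. Then ε_T(h) ≤ (m/(n+m)) ε̂_T(h) + (n/(n+m)) ε̂_S(h) + (n/(n+m)) [ d_{HΔH}(μ_S, μ_T) + min( ∫ |f_S(z) − f_T(z)| dμ_S(z), ∫ |f_S(z) − f_T(z)| dμ_T(z) ) + (n_S + n_T) + C_S ] + (m/(n+m)) C_T. -/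
open MeasureTheory Set

/-- The HΔH-divergence between two measures, for a hypothesis class `H` of
{0,1}-valued functions. -/
noncomputable def dHdH {Z : Type*} [MeasurableSpace Z] (H : Set (Z → ℝ))
    (μ ν : Measure Z) : ℝ :=
  sSup {x | ∃ g ∈ H, ∃ g' ∈ H,
    x = |(μ {z | g z ≠ g' z}).toReal - (ν {z | g z ≠ g' z}).toReal|}

section helpers
variable {Z : Type*} [MeasurableSpace Z]

lemma abs_eq_indicator' {g g' : Z → ℝ} (hg : ∀ z, g z = 0 ∨ g z = 1)
    (hg' : ∀ z, g' z = 0 ∨ g' z = 1) (z : Z) :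
    |g z - g' z| = ({z | g z ≠ g' z}).indicator (fun _ => (1:ℝ)) z := by
  by_cases hz : g z = g' z
  · simp [Set.indicator, hz]
  · rcases hg z with h1 | h1 <;> rcases hg' z with h2 | h2 <;>
      simp_all [Set.indicator] <;> norm_num

lemma integral_abs_eq (μ : Measure Z) {g g' : Z → ℝ}
    (hgm : Measurable g) (hg'm : Measurable g')
    (hg : ∀ z, g z = 0 ∨ g z = 1) (hg' : ∀ z, g' z = 0 ∨ g' z = 1) :
    ∫ z, |g z - g' z| ∂μ = (μ {z | g z ≠ g' z}).toReal := by
  have hA : MeasurableSet {z | g z ≠ g' z} :=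
    (measurableSet_eq_fun hgm hg'm).compl
  calc ∫ z, |g z - g' z| ∂μ
      = ∫ z, ({z | g z ≠ g' z}).indicator (fun _ => (1:ℝ)) z ∂μ :=
        integral_congr_ae (Filter.Eventually.of_forall
          (abs_eq_indicator' hg hg'))
    _ = (μ {z | g z ≠ g' z}).toReal := by
        rw [integral_indicator_const _ hA]; simp; rfl

lemma le_dHdH (H : Set (Z → ℝ)) (μ ν : Measure Z)
    [IsProbabilityMeasure μ] [IsProbabilityMeasure ν]
    {g g' : Z → ℝ} (hg : g ∈ H) (hg' : g' ∈ H) :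
    |(μ {z | g z ≠ g' z}).toReal - (ν {z | g z ≠ g' z}).toReal| ≤ dHdH H μ ν := by
  apply le_csSup
  · refine ⟨1, ?_⟩
    rintro x ⟨a, _, b, _, rfl⟩
    have h1 : (μ {z | a z ≠ b z}).toReal ≤ 1 := by
      simpa using ENNReal.toReal_mono (by simp) (prob_le_one (μ := μ))
    have h2 : (ν {z | a z ≠ b z}).toReal ≤ 1 := by
      simpa using ENNReal.toReal_mono (by simp) (prob_le_one (μ := ν))
    have h3 : (0:ℝ) ≤ (μ {z | a z ≠ b z}).toReal := ENNReal.toReal_nonneg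
    have h4 : (0:ℝ) ≤ (ν {z | a z ≠ b z}).toReal := ENNReal.toReal_nonneg
    rw [abs_le]; constructor <;> linarith
  · exact ⟨g, hg, g', hg', rfl⟩

/-- divergence transfer step -/
lemma div_step (H : Set (Z → ℝ)) (μS μT : Measure Z)
    [IsProbabilityMeasure μS] [IsProbabilityMeasure μT]
    (hH : ∀ g ∈ H, Measurable g ∧ ∀ z, g z = 0 ∨ g z = 1)
    {g g' : Z → ℝ} (hg : g ∈ H) (hg' : g' ∈ H) :
    ∫ z, |g z - g' z| ∂μT ≤ (∫ z, |g z - g' z| ∂μS) + dHdH H μS μT := by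
  rw [integral_abs_eq μT (hH g hg).1 (hH g' hg').1 (hH g hg).2 (hH g' hg').2,
      integral_abs_eq μS (hH g hg).1 (hH g' hg').1 (hH g hg).2 (hH g' hg').2]
  have := le_dHdH H μS μT hg hg'
  rw [abs_le] at this
  linarith [this.1]

lemma integrable_bdd {α : Type*} [MeasurableSpace α] (μ : Measure α)
    [IsProbabilityMeasure μ] {f : α → ℝ} (hf : Measurable f)
    (hbd : ∀ᵐ x ∂μ, |f x| ≤ 1) : Integrable f μ :=
  (integrable_const (1:ℝ)).mono' hf.aestronglyMeasurable
    (by simpa using hbd)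

end helpers

/-- Deterministic core of Theorem 4.1 (classification bound in Semi-DA). -/
theorem stmt_11 {Z : Type*} [MeasurableSpace Z]
    (μS μT : Measure Z) [IsProbabilityMeasure μS] [IsProbabilityMeasure μT]
    (μbarS μbarT μhatS μhatT : Measure (Z × ℝ))
    [IsProbabilityMeasure μbarS] [IsProbabilityMeasure μbarT]
    [IsProbabilityMeasure μhatS] [IsProbabilityMeasure μhatT]
    (hmS : μbarS.map Prod.fst = μS) (hmT : μbarT.map Prod.fst = μT)
    (hyS : ∀ᵐ p ∂μbarS, p.2 = 0 ∨ p.2 = 1)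
    (hyT : ∀ᵐ p ∂μbarT, p.2 = 0 ∨ p.2 = 1)
    (hyhatS : ∀ᵐ p ∂μhatS, p.2 = 0 ∨ p.2 = 1)
    (hyhatT : ∀ᵐ p ∂μhatT, p.2 = 0 ∨ p.2 = 1)
    (H : Set (Z → ℝ)) (hHne : H.Nonempty)
    (hH : ∀ g ∈ H, Measurable g ∧ ∀ z, g z = 0 ∨ g z = 1)
    (fS fT : Z → ℝ) (hfS : fS ∈ H) (hfT : fT ∈ H)
    (h : Z → ℝ) (hh : h ∈ H)
    (n m : ℝ) (hn : 0 < n) (hm : 0 < m)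
    (CS CT : ℝ) (hCS : 0 ≤ CS) (hCT : 0 ≤ CT)
    (hdevS : (∫ p : Z × ℝ, |h p.1 - p.2| ∂μbarS) ≤
      (∫ p : Z × ℝ, |h p.1 - p.2| ∂μhatS) + CS)
    (hdevT : (∫ p : Z × ℝ, |h p.1 - p.2| ∂μbarT) ≤
      (∫ p : Z × ℝ, |h p.1 - p.2| ∂μhatT) + CT) :
    (∫ p : Z × ℝ, |h p.1 - p.2| ∂μbarT) ≤
      (m / (n + m)) * (∫ p : Z × ℝ, |h p.1 - p.2| ∂μhatT) +
      (n / (n + m)) * (∫ p : Z × ℝ, |h p.1 - p.2| ∂μhatS) +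
      (n / (n + m)) * (dHdH H μS μT +
        min (∫ z, |fS z - fT z| ∂μS) (∫ z, |fS z - fT z| ∂μT) +
        ((∫ p : Z × ℝ, |p.2 - fS p.1| ∂μbarS) +
          ∫ p : Z × ℝ, |p.2 - fT p.1| ∂μbarT) + CS) +
      (m / (n + m)) * CT := by
  obtain ⟨hhm, hhv⟩ := hH h hh
  obtain ⟨hSm, hSv⟩ := hH fS hfS
  obtain ⟨hTm, hTv⟩ := hH fT hfT
  -- measurability helpers
  have mhfst : Measurable fun p : Z × ℝ => h p.1 := hhm.comp measurable_fst
  have mSfst : Measurable fun p : Z × ℝ => fS p.1 := hSm.comp measurable_fst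
  have mTfst : Measurable fun p : Z × ℝ => fT p.1 := hTm.comp measurable_fst
  -- integrability on product spaces
  have bd01 : ∀ (u : Z → ℝ), (∀ z, u z = 0 ∨ u z = 1) →
      ∀ y : ℝ, y = 0 ∨ y = 1 → ∀ z, |u z - y| ≤ 1 := by
    intro u hu y hy z
    rcases hu z with h1 | h1 <;> rcases hy with h2 | h2 <;> simp [h1, h2]
  have intT1 : Integrable (fun p : Z × ℝ => |h p.1 - p.2|) μbarT :=
    integrable_bdd _ (mhfst.sub measurable_snd).abs
      (hyT.mono fun p hp => by simpa [abs_abs] using bd01 h hhv p.2 hp p.1)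
  have intT2 : Integrable (fun p : Z × ℝ => |h p.1 - fT p.1|) μbarT :=
    integrable_bdd _ (mhfst.sub mTfst).abs
      (Filter.Eventually.of_forall fun p => by
        simpa [abs_abs] using bd01 h hhv (fT p.1) (hTv p.1) p.1)
  have intT3 : Integrable (fun p : Z × ℝ => |p.2 - fT p.1|) μbarT :=
    integrable_bdd _ (measurable_snd.sub mTfst).abs
      (hyT.mono fun p hp => by
        have := bd01 fT hTv p.2 hp p.1
        rw [abs_sub_comm] at this
        simpa [abs_abs] using this)
  have intS1 : Integrable (fun p : Z × ℝ => |h p.1 - p.2|) μbarS :=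
    integrable_bdd _ (mhfst.sub measurable_snd).abs
      (hyS.mono fun p hp => by simpa [abs_abs] using bd01 h hhv p.2 hp p.1)
  have intS2 : Integrable (fun p : Z × ℝ => |h p.1 - fS p.1|) μbarS :=
    integrable_bdd _ (mhfst.sub mSfst).abs
      (Filter.Eventually.of_forall fun p => by
        simpa [abs_abs] using bd01 h hhv (fS p.1) (hSv p.1) p.1)
  have intS3 : Integrable (fun p : Z × ℝ => |p.2 - fS p.1|) μbarS :=
    integrable_bdd _ (measurable_snd.sub mSfst).abs
      (hyS.mono fun p hp => by
        have := bd01 fS hSv p.2 hp p.1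
        rw [abs_sub_comm] at this
        simpa [abs_abs] using this)
  -- integrability on Z
  have intZ : ∀ (μ : Measure Z) [IsProbabilityMeasure μ] (u v : Z → ℝ),
      Measurable u → Measurable v → (∀ z, u z = 0 ∨ u z = 1) →
      (∀ z, v z = 0 ∨ v z = 1) → Integrable (fun z => |u z - v z|) μ := by
    intro μ _ u v hu hv huv hvv
    exact integrable_bdd _ (hu.sub hv).abs
      (Filter.Eventually.of_forall fun z => by
        simpa [abs_abs] using bd01 u huv (v z) (hvv z) z)
  -- pushforward identities
  have pushT : ∀ (u v : Z → ℝ), Measurable u → Measurable v →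
      ∫ z, |u z - v z| ∂μT = ∫ p : Z × ℝ, |u p.1 - v p.1| ∂μbarT := by
    intro u v hu hv
    rw [← hmT, integral_map measurable_fst.aemeasurable (f := fun z => |u z - v z|)
      ((hu.sub hv).abs.aestronglyMeasurable)]
  have pushS : ∀ (u v : Z → ℝ), Measurable u → Measurable v →
      ∫ z, |u z - v z| ∂μS = ∫ p : Z × ℝ, |u p.1 - v p.1| ∂μbarS := by
    intro u v hu hv
    rw [← hmS, integral_map measurable_fst.aemeasurable (f := fun z => |u z - v z|)
      ((hu.sub hv).abs.aestronglyMeasurable)]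
  -- Step 1: ε_T(h) ≤ ∫ |h - fT| dμT + nT
  have step1 : (∫ p : Z × ℝ, |h p.1 - p.2| ∂μbarT) ≤
      (∫ z, |h z - fT z| ∂μT) + ∫ p : Z × ℝ, |p.2 - fT p.1| ∂μbarT := by
    rw [pushT h fT hhm hTm]
    rw [← integral_add intT2 intT3]
    refine integral_mono intT1 (intT2.add intT3) fun p => ?_
    calc |h p.1 - p.2| = |(h p.1 - fT p.1) + (fT p.1 - p.2)| := by ring_nf
      _ ≤ |h p.1 - fT p.1| + |fT p.1 - p.2| := abs_add_le _ _
      _ = |h p.1 - fT p.1| + |p.2 - fT p.1| := by rw [abs_sub_comm (fT p.1)]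
  -- Step 3: ∫ |h - fS| dμS ≤ ε_S(h) + nS
  have step3 : (∫ z, |h z - fS z| ∂μS) ≤
      (∫ p : Z × ℝ, |h p.1 - p.2| ∂μbarS) +
        ∫ p : Z × ℝ, |p.2 - fS p.1| ∂μbarS := by
    rw [pushS h fS hhm hSm, ← integral_add intS1 intS3]
    refine integral_mono intS2 (intS1.add intS3) fun p => ?_
    calc |h p.1 - fS p.1| = |(h p.1 - p.2) + (p.2 - fS p.1)| := by ring_nf
      _ ≤ |h p.1 - p.2| + |p.2 - fS p.1| := abs_add_le _ _
  -- Step 2: ∫ |h - fT| dμT ≤ ∫ |h - fS| dμS + dHdH + min(...)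
  have step2 : (∫ z, |h z - fT z| ∂μT) ≤
      (∫ z, |h z - fS z| ∂μS) + dHdH H μS μT +
        min (∫ z, |fS z - fT z| ∂μS) (∫ z, |fS z - fT z| ∂μT) := by
    rcases min_cases (∫ z, |fS z - fT z| ∂μS) (∫ z, |fS z - fT z| ∂μT) with
      ⟨heq, _⟩ | ⟨heq, _⟩ <;> rw [heq]
    · -- use path through μS
      have d1 : (∫ z, |h z - fT z| ∂μT) ≤
          (∫ z, |h z - fT z| ∂μS) + dHdH H μS μT :=
        div_step H μS μT hH hh hfT
      have d2 : (∫ z, |h z - fT z| ∂μS) ≤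
          (∫ z, |h z - fS z| ∂μS) + ∫ z, |fS z - fT z| ∂μS := by
        rw [← integral_add (intZ μS h fS hhm hSm hhv hSv)
          (intZ μS fS fT hSm hTm hSv hTv)]
        refine integral_mono (intZ μS h fT hhm hTm hhv hTv)
          ((intZ μS h fS hhm hSm hhv hSv).add
            (intZ μS fS fT hSm hTm hSv hTv)) fun z => ?_
        calc |h z - fT z| = |(h z - fS z) + (fS z - fT z)| := by ring_nf
          _ ≤ |h z - fS z| + |fS z - fT z| := abs_add_le _ _
      linarith
    · -- use path through μT
      have d1 : (∫ z, |h z - fT z| ∂μT) ≤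
          (∫ z, |h z - fS z| ∂μT) + ∫ z, |fS z - fT z| ∂μT := by
        rw [← integral_add (intZ μT h fS hhm hSm hhv hSv)
          (intZ μT fS fT hSm hTm hSv hTv)]
        refine integral_mono (intZ μT h fT hhm hTm hhv hTv)
          ((intZ μT h fS hhm hSm hhv hSv).add
            (intZ μT fS fT hSm hTm hSv hTv)) fun z => ?_
        calc |h z - fT z| = |(h z - fS z) + (fS z - fT z)| := by ring_nf
          _ ≤ |h z - fS z| + |fS z - fT z| := abs_add_le _ _
      have d2 : (∫ z, |h z - fS z| ∂μT) ≤
          (∫ z, |h z - fS z| ∂μS) + dHdH H μS μT :=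
        div_step H μS μT hH hh hfS
      linarith
  -- Combine
  set ET := ∫ p : Z × ℝ, |h p.1 - p.2| ∂μbarT with hET
  set ES := ∫ p : Z × ℝ, |h p.1 - p.2| ∂μbarS with hES
  set EhT := ∫ p : Z × ℝ, |h p.1 - p.2| ∂μhatT
  set EhS := ∫ p : Z × ℝ, |h p.1 - p.2| ∂μhatS
  set nS := ∫ p : Z × ℝ, |p.2 - fS p.1| ∂μbarS
  set nT := ∫ p : Z × ℝ, |p.2 - fT p.1| ∂μbarT
  set d := dHdH H μS μT
  set mn := min (∫ z, |fS z - fT z| ∂μS) (∫ z, |fS z - fT z| ∂μT)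
  have key : ET ≤ ES + d + mn + nS + nT := by linarith
  have hA : ET ≤ EhS + CS + (d + mn + nS + nT) := by linarith
  have hB : ET ≤ EhT + CT := hdevT
  have hα : 0 < n / (n + m) := div_pos hn (by linarith)
  have hβ : 0 < m / (n + m) := div_pos hm (by linarith)
  have hsum : n / (n + m) + m / (n + m) = 1 := by
    field_simp
  have h1 := mul_le_mul_of_nonneg_left hA hα.le
  have h2 := mul_le_mul_of_nonneg_left hB hβ.le
  have h3 : (n / (n + m)) * ET + (m / (n + m)) * ET = ET := by
    field_simp
  linarith
end

section
/- (Deterministic core of Theorem 4.2, regression bound in Semi-DA.) Let h ∈ H, let n, m be positive reals, and suppose the deviation bounds ε_S(h) ≤ ε̂_S(h) + C_S and ε_T(h) ≤ ε̂_T(h) + C_T hold for constants C_S, C_T ≥ 0, where ε̂_S(h) := ∫ |h(z) − y| dμ̂_S(z,y) and ε̂_T(h) := ∫ |h(z) − y| dμ̂_T(z,y) are risks under empirical measures μ̂_S, μ̂_T. Then ε_T(h) ≤ (m/(n+m)) ε̂_T(h) + (n/(n+m)) ε̂_S(h) + (n/(n+m)) [ d_H̃(μ_S, μ_T) + min( ∫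 |f_S(z) − f_T(z)| dμ_S(z), ∫ |f_S(z) − f_T(z)| dμ_T(z) ) + (n_S + n_T) + C_S ] + (m/(n+m)) C_T. -/
open MeasureTheory Set

/-- The discrepancy `d_H̃` over the class of threshold indicators of pairwise
differences of functions in `H`. -/
noncomputable def dHt {Z : Type*} [MeasurableSpace Z] (H : Set (Z → ℝ))
    (μ ν : Measure Z) : ℝ :=
  sSup {x | ∃ g ∈ H, ∃ g' ∈ H, ∃ t ∈ Icc (0 : ℝ) 1,
    x = |(μ {z | t < |g z - g' z|}).toReal - (ν {z | t < |g z - g' z|}).toReal|}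

section Aux

variable {Z : Type*} [MeasurableSpace Z]

lemma toReal_prob_le_one (μ : Measure Z) [IsProbabilityMeasure μ] (s : Set Z) :
    (μ s).toReal ≤ 1 := by
  have h := prob_le_one (μ := μ) (s := s)
  have := (ENNReal.toReal_le_toReal (measure_ne_top μ s) ENNReal.one_ne_top).mpr h
  simpa using this

lemma dHt_bdd (H : Set (Z → ℝ)) (μ ν : Measure Z)
    [IsProbabilityMeasure μ] [IsProbabilityMeasure ν] :
    BddAbove {x | ∃ g ∈ H, ∃ g' ∈ H, ∃ t ∈ Icc (0 : ℝ) 1,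
      x = |(μ {z | t < |g z - g' z|}).toReal - (ν {z | t < |g z - g' z|}).toReal|} := by
  refine ⟨1, fun x hx => ?_⟩
  obtain ⟨g, -, g', -, t, -, rfl⟩ := hx
  have h1 := toReal_prob_le_one μ {z | t < |g z - g' z|}
  have h2 := toReal_prob_le_one ν {z | t < |g z - g' z|}
  have h3 : (0:ℝ) ≤ (μ {z | t < |g z - g' z|}).toReal := ENNReal.toReal_nonneg
  have h4 : (0:ℝ) ≤ (ν {z | t < |g z - g' z|}).toReal := ENNReal.toReal_nonneg
  rw [abs_le]
  constructor <;> linarith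

lemma le_dHt (H : Set (Z → ℝ)) (μ ν : Measure Z)
    [IsProbabilityMeasure μ] [IsProbabilityMeasure ν]
    {g g' : Z → ℝ} (hg : g ∈ H) (hg' : g' ∈ H) {t : ℝ} (ht : t ∈ Icc (0:ℝ) 1) :
    |(μ {z | t < |g z - g' z|}).toReal - (ν {z | t < |g z - g' z|}).toReal| ≤ dHt H μ ν :=
  le_csSup (dHt_bdd H μ ν) ⟨g, hg, g', hg', t, ht, rfl⟩

lemma int_bdd {W : Type*} [MeasurableSpace W] (κ : Measure W) [IsFiniteMeasure κ]
    {f : W → ℝ} {C : ℝ} (hf : Measurable f) (hb : ∀ w, |f w| ≤ C) : Integrable f κ :=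
  ⟨hf.aestronglyMeasurable, HasFiniteIntegral.of_bounded
    (ae_of_all _ fun w => by simpa [Real.norm_eq_abs] using hb w)⟩

lemma compare_dHt (H : Set (Z → ℝ))
    (hH : ∀ g ∈ H, Measurable g ∧ ∀ z, g z ∈ Icc (0 : ℝ) 1)
    (μ ν : Measure Z) [IsProbabilityMeasure μ] [IsProbabilityMeasure ν]
    {g g' : Z → ℝ} (hg : g ∈ H) (hg' : g' ∈ H) :
    ∫ z, |g z - g' z| ∂ν ≤ (∫ z, |g z - g' z| ∂μ) + dHt H μ ν := by
  have hgm := (hH g hg).1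
  have hg'm := (hH g' hg').1
  have hF01 : ∀ z, 0 ≤ |g z - g' z| ∧ |g z - g' z| ≤ 1 := by
    intro z
    have h1 := (hH g hg).2 z
    have h2 := (hH g' hg').2 z
    exact ⟨abs_nonneg _, abs_le.mpr ⟨by linarith [h1.1, h2.2], by linarith [h1.2, h2.1]⟩⟩
  have hFmeas : Measurable fun z => |g z - g' z| := (hgm.sub hg'm).abs
  have hintν : Integrable (fun z => |g z - g' z|) ν :=
    int_bdd ν hFmeas fun z => by rw [abs_abs]; exact (hF01 z).2
  have hintμ : Integrable (fun z => |g z - g' z|) μ :=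
    int_bdd μ hFmeas fun z => by rw [abs_abs]; exact (hF01 z).2
  rw [hintν.integral_eq_integral_Ioc_meas_le (ae_of_all _ fun z => (hF01 z).1)
        (ae_of_all _ fun z => (hF01 z).2),
      hintμ.integral_eq_integral_Ioc_meas_le (ae_of_all _ fun z => (hF01 z).1)
        (ae_of_all _ fun z => (hF01 z).2)]
  haveI : IsFiniteMeasure (volume.restrict (Ioc (0:ℝ) 1)) := by
    constructor
    rw [Measure.restrict_apply_univ]
    simp [Real.volume_Ioc]
  have hmeast : ∀ κ : Measure Z,
      Measurable fun t : ℝ => (κ {a | t ≤ |g a - g' a|}).toReal := by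
    intro κ
    have hanti : Antitone fun t : ℝ => κ {a | t ≤ |g a - g' a|} :=
      fun s t hst => measure_mono fun a ha => hst.trans ha
    exact hanti.measurable.ennreal_toReal
  have hinttν : IntegrableOn (fun t : ℝ => (ν {a | t ≤ |g a - g' a|}).toReal)
      (Ioc (0:ℝ) 1) volume :=
    int_bdd _ (hmeast ν) fun t => by
      rw [abs_of_nonneg ENNReal.toReal_nonneg]; exact toReal_prob_le_one ν _
  have hinttμ : IntegrableOn (fun t : ℝ => (μ {a | t ≤ |g a - g' a|}).toReal)
      (Ioc (0:ℝ) 1) volume :=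
    int_bdd _ (hmeast μ) fun t => by
      rw [abs_of_nonneg ENNReal.toReal_nonneg]; exact toReal_prob_le_one μ _
  have hconst : IntegrableOn (fun _ : ℝ => dHt H μ ν) (Ioc (0:ℝ) 1) volume :=
    integrable_const _
  have key : ∀ᵐ t ∂(volume.restrict (Ioc (0:ℝ) 1)),
      (ν {a | t ≤ |g a - g' a|}).toReal ≤
        (μ {a | t ≤ |g a - g' a|}).toReal + dHt H μ ν := by
    filter_upwards [meas_le_ae_eq_meas_lt (μ := ν) (volume.restrict (Ioc (0:ℝ) 1))
        (fun a => |g a - g' a|),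
      meas_le_ae_eq_meas_lt (μ := μ) (volume.restrict (Ioc (0:ℝ) 1))
        (fun a => |g a - g' a|),
      ae_restrict_mem measurableSet_Ioc] with t h1 h2 ht
    rw [h1, h2]
    have hd := le_dHt H μ ν hg hg' (t := t) ⟨ht.1.le, ht.2⟩
    have := le_abs_self ((ν {z | t < |g z - g' z|}).toReal -
      (μ {z | t < |g z - g' z|}).toReal)
    rw [abs_sub_comm] at this
    have : (ν {z | t < |g z - g' z|}).toReal - (μ {z | t < |g z - g' z|}).toReal ≤
        dHt H μ ν := this.trans hd
    have heq1 : {a | t < |g a - g' a|} = {z | t < |g z - g' z|} := rfl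
    linarith [this]
  calc ∫ t in Ioc (0:ℝ) 1, (ν {a | t ≤ |g a - g' a|}).toReal
      ≤ ∫ t in Ioc (0:ℝ) 1, ((μ {a | t ≤ |g a - g' a|}).toReal + dHt H μ ν) :=
        integral_mono_ae hinttν (hinttμ.add hconst) key
    _ = (∫ t in Ioc (0:ℝ) 1, (μ {a | t ≤ |g a - g' a|}).toReal) + dHt H μ ν := by
        rw [integral_add hinttμ hconst, setIntegral_const]
        simp [Real.volume_Ioc]

end Aux

/-- Deterministic core of Theorem 4.2 (regression bound in Semi-DA). -/
theorem stmt_12 {Z : Type*} [MeasurableSpace Z]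
    (μS μT : Measure Z) [IsProbabilityMeasure μS] [IsProbabilityMeasure μT]
    (μbarS μbarT μhatS μhatT : Measure (Z × ℝ))
    [IsProbabilityMeasure μbarS] [IsProbabilityMeasure μbarT]
    [IsProbabilityMeasure μhatS] [IsProbabilityMeasure μhatT]
    (hmS : μbarS.map Prod.fst = μS) (hmT : μbarT.map Prod.fst = μT)
    (hyS : Integrable (fun p : Z × ℝ => p.2) μbarS)
    (hyT : Integrable (fun p : Z × ℝ => p.2) μbarT)
    (hyhatS : Integrable (fun p : Z × ℝ => p.2) μhatS)
    (hyhatT : Integrable (fun p : Z × ℝ => p.2) μhatT)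
    (H : Set (Z → ℝ)) (hHne : H.Nonempty)
    (hH : ∀ g ∈ H, Measurable g ∧ ∀ z, g z ∈ Icc (0 : ℝ) 1)
    (fS fT : Z → ℝ) (hfS : fS ∈ H) (hfT : fT ∈ H)
    (h : Z → ℝ) (hh : h ∈ H)
    (n m : ℝ) (hn : 0 < n) (hm : 0 < m)
    (CS CT : ℝ) (hCS : 0 ≤ CS) (hCT : 0 ≤ CT)
    (hdevS : (∫ p : Z × ℝ, |h p.1 - p.2| ∂μbarS) ≤
      (∫ p : Z × ℝ, |h p.1 - p.2| ∂μhatS) + CS)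
    (hdevT : (∫ p : Z × ℝ, |h p.1 - p.2| ∂μbarT) ≤
      (∫ p : Z × ℝ, |h p.1 - p.2| ∂μhatT) + CT) :
    (∫ p : Z × ℝ, |h p.1 - p.2| ∂μbarT) ≤
      (m / (n + m)) * (∫ p : Z × ℝ, |h p.1 - p.2| ∂μhatT) +
      (n / (n + m)) * (∫ p : Z × ℝ, |h p.1 - p.2| ∂μhatS) +
      (n / (n + m)) * (dHt H μS μT +
        min (∫ z, |fS z - fT z| ∂μS) (∫ z, |fS z - fT z| ∂μT) +
        ((∫ p : Z × ℝ, |p.2 - fS p.1| ∂μbarS) +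
          ∫ p : Z × ℝ, |p.2 - fT p.1| ∂μbarT) + CS) +
      (m / (n + m)) * CT := by
  obtain ⟨hhm, hh01⟩ := hH h hh
  obtain ⟨hSm, hS01⟩ := hH fS hfS
  obtain ⟨hTm, hT01⟩ := hH fT hfT
  -- bounded-difference helper facts
  have habs1 : ∀ (g g' : Z → ℝ), (∀ z, g z ∈ Icc (0:ℝ) 1) → (∀ z, g' z ∈ Icc (0:ℝ) 1) →
      ∀ z, |g z - g' z| ≤ 1 := by
    intro g g' hg hg' z
    have h1 := hg z; have h2 := hg' z
    exact abs_le.mpr ⟨by linarith [h1.1, h2.2], by linarith [h1.2, h2.1]⟩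
  -- push-forward identity
  have hmap : ∀ (κ : Measure (Z × ℝ)) (ρ : Measure Z), κ.map Prod.fst = ρ →
      ∀ (φ : Z → ℝ), Measurable φ →
      (∫ p : Z × ℝ, φ p.1 ∂κ) = ∫ z, φ z ∂ρ := by
    intro κ ρ hκ φ hφ
    rw [← hκ, integral_map measurable_fst.aemeasurable hφ.aestronglyMeasurable]
  -- integrability of |g p.1 - p.2|
  have intY : ∀ (κ : Measure (Z × ℝ)) [IsProbabilityMeasure κ],
      Integrable (fun p : Z × ℝ => p.2) κ →
      ∀ (g : Z → ℝ), Measurable g → (∀ z, g z ∈ Icc (0:ℝ) 1) →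
      Integrable (fun p : Z × ℝ => |g p.1 - p.2|) κ := by
    intro κ _ hy g hg hg1
    have hmeas : Measurable fun p : Z × ℝ => |g p.1 - p.2| :=
      ((hg.comp measurable_fst).sub measurable_snd).abs
    have hbig : Integrable (fun p : Z × ℝ => 1 + |p.2|) κ :=
      (integrable_const 1).add hy.abs
    refine hbig.mono' hmeas.aestronglyMeasurable (ae_of_all _ fun p => ?_)
    rw [Real.norm_eq_abs, abs_abs]
    have h1 := hg1 p.1
    have h2 := abs_add_le (g p.1) (-p.2)
    have h3 : |g p.1| ≤ 1 := abs_le.mpr ⟨by linarith [h1.1], h1.2⟩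
    calc |g p.1 - p.2| ≤ |g p.1| + |(-p.2)| := by
          simpa [sub_eq_add_neg] using h2
      _ ≤ 1 + |p.2| := by rw [abs_neg]; linarith
  have intYS : Integrable (fun p : Z × ℝ => |h p.1 - p.2|) μbarS :=
    intY μbarS hyS h hhm hh01
  have intYT : Integrable (fun p : Z × ℝ => |h p.1 - p.2|) μbarT :=
    intY μbarT hyT h hhm hh01
  have intYS' : Integrable (fun p : Z × ℝ => |p.2 - fS p.1|) μbarS :=
    (intY μbarS hyS fS hSm hS01).congr (ae_of_all _ fun p => abs_sub_comm _ _)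
  have intYT' : Integrable (fun p : Z × ℝ => |p.2 - fT p.1|) μbarT :=
    (intY μbarT hyT fT hTm hT01).congr (ae_of_all _ fun p => abs_sub_comm _ _)
  -- integrability of |g p.1 - g' p.1| on product spaces
  have intGG : ∀ (κ : Measure (Z × ℝ)) [IsProbabilityMeasure κ],
      ∀ (g g' : Z → ℝ), Measurable g → Measurable g' →
      (∀ z, g z ∈ Icc (0:ℝ) 1) → (∀ z, g' z ∈ Icc (0:ℝ) 1) →
      Integrable (fun p : Z × ℝ => |g p.1 - g' p.1|) κ := by
    intro κ _ g g' hg hg' h1 h2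
    exact int_bdd κ (((hg.comp measurable_fst).sub (hg'.comp measurable_fst)).abs)
      fun p => by rw [abs_abs]; exact habs1 g g' h1 h2 p.1
  -- integrability of |g z - g' z| on Z
  have intZ : ∀ (ρ : Measure Z) [IsProbabilityMeasure ρ],
      ∀ (g g' : Z → ℝ), Measurable g → Measurable g' →
      (∀ z, g z ∈ Icc (0:ℝ) 1) → (∀ z, g' z ∈ Icc (0:ℝ) 1) →
      Integrable (fun z => |g z - g' z|) ρ := by
    intro ρ _ g g' hg hg' h1 h2
    exact int_bdd ρ ((hg.sub hg').abs)
      (fun z => by rw [abs_abs]; exact habs1 g g' h1 h2 z)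
  set εT := ∫ p : Z × ℝ, |h p.1 - p.2| ∂μbarT with hεT
  set εS := ∫ p : Z × ℝ, |h p.1 - p.2| ∂μbarS with hεS
  set nT := ∫ p : Z × ℝ, |p.2 - fT p.1| ∂μbarT with hnT
  set nS := ∫ p : Z × ℝ, |p.2 - fS p.1| ∂μbarS with hnS
  -- Step 1: εT ≤ ∫ |h - fT| dμT + nT
  have step1 : εT ≤ (∫ z, |h z - fT z| ∂μT) + nT := by
    have hmono : εT ≤ ∫ p : Z × ℝ, (|h p.1 - fT p.1| + |p.2 - fT p.1|) ∂μbarT := by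
      refine integral_mono intYT ((intGG μbarT h fT hhm hTm hh01 hT01).add intYT')
        fun p => ?_
      calc |h p.1 - p.2| = |(h p.1 - fT p.1) + (fT p.1 - p.2)| := by ring_nf
        _ ≤ |h p.1 - fT p.1| + |fT p.1 - p.2| := abs_add_le _ _
        _ = |h p.1 - fT p.1| + |p.2 - fT p.1| := by rw [abs_sub_comm (fT p.1) p.2]
    rw [integral_add (intGG μbarT h fT hhm hTm hh01 hT01) intYT'] at hmono
    rwa [hmap μbarT μT hmT (fun z => |h z - fT z|) ((hhm.sub hTm).abs)] at hmono
  -- Step 3: ∫ |h - fS| dμS ≤ εS + nS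
  have step3 : (∫ z, |h z - fS z| ∂μS) ≤ εS + nS := by
    have hmono : (∫ p : Z × ℝ, |h p.1 - fS p.1| ∂μbarS) ≤
        ∫ p : Z × ℝ, (|h p.1 - p.2| + |p.2 - fS p.1|) ∂μbarS := by
      refine integral_mono (intGG μbarS h fS hhm hSm hh01 hS01) (intYS.add intYS')
        fun p => ?_
      calc |h p.1 - fS p.1| = |(h p.1 - p.2) + (p.2 - fS p.1)| := by ring_nf
        _ ≤ |h p.1 - p.2| + |p.2 - fS p.1| := abs_add_le _ _
    rw [integral_add intYS intYS'] at hmono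
    rwa [hmap μbarS μS hmS (fun z => |h z - fS z|) ((hhm.sub hSm).abs)] at hmono
  -- Step 2: ∫|h - fT| dμT ≤ ∫|h - fS| dμS + dHt + min
  have step2 : (∫ z, |h z - fT z| ∂μT) ≤ (∫ z, |h z - fS z| ∂μS) + dHt H μS μT +
      min (∫ z, |fS z - fT z| ∂μS) (∫ z, |fS z - fT z| ∂μT) := by
    rcases min_cases (∫ z, |fS z - fT z| ∂μS) (∫ z, |fS z - fT z| ∂μT) with
      ⟨hmin, -⟩ | ⟨hmin, -⟩ <;> rw [hmin]
    · -- via μS route: ∫|h-fT|μT ≤ ∫|h-fT|μS + dHt ≤ ∫|h-fS|μS + ∫|fS-fT|μS + dHt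
      have c1 : (∫ z, |h z - fT z| ∂μT) ≤ (∫ z, |h z - fT z| ∂μS) + dHt H μS μT :=
        compare_dHt H hH μS μT hh hfT
      have c2 : (∫ z, |h z - fT z| ∂μS) ≤
          (∫ z, |h z - fS z| ∂μS) + ∫ z, |fS z - fT z| ∂μS := by
        have := integral_mono (intZ μS h fT hhm hTm hh01 hT01)
          ((intZ μS h fS hhm hSm hh01 hS01).add (intZ μS fS fT hSm hTm hS01 hT01))
          (fun z => by
            calc |h z - fT z| = |(h z - fS z) + (fS z - fT z)| := by ring_nf
              _ ≤ |h z - fS z| + |fS z - fT z| := abs_add_le _ _)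
        simp only [Pi.add_apply] at this
        rwa [integral_add (intZ μS h fS hhm hSm hh01 hS01)
          (intZ μS fS fT hSm hTm hS01 hT01)] at this
      linarith
    · -- via μT route: ∫|h-fT|μT ≤ ∫|h-fS|μT + ∫|fS-fT|μT ≤ (∫|h-fS|μS + dHt) + ...
      have c1 : (∫ z, |h z - fT z| ∂μT) ≤
          (∫ z, |h z - fS z| ∂μT) + ∫ z, |fS z - fT z| ∂μT := by
        have := integral_mono (intZ μT h fT hhm hTm hh01 hT01)
          ((intZ μT h fS hhm hSm hh01 hS01).add (intZ μT fS fT hSm hTm hS01 hT01))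
          (fun z => by
            calc |h z - fT z| = |(h z - fS z) + (fS z - fT z)| := by ring_nf
              _ ≤ |h z - fS z| + |fS z - fT z| := abs_add_le _ _)
        simp only [Pi.add_apply] at this
        rwa [integral_add (intZ μT h fS hhm hSm hh01 hS01)
          (intZ μT fS fT hSm hTm hS01 hT01)] at this
      have c2 : (∫ z, |h z - fS z| ∂μT) ≤ (∫ z, |h z - fS z| ∂μS) + dHt H μS μT :=
        compare_dHt H hH μS μT hh hfS
      linarith
  -- combine
  have hgap : εT ≤ εS + (dHt H μS μT +
      min (∫ z, |fS z - fT z| ∂μS) (∫ z, |fS z - fT z| ∂μT) + (nS + nT)) := by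
    linarith
  have hsum : 0 < n + m := by linarith
  have hα : 0 ≤ n / (n + m) := div_nonneg hn.le hsum.le
  have hβ : 0 ≤ m / (n + m) := div_nonneg hm.le hsum.le
  have hαβ : n / (n + m) + m / (n + m) = 1 := by field_simp
  have hT' : εT ≤ (∫ p : Z × ℝ, |h p.1 - p.2| ∂μhatT) + CT := hdevT
  have hS' : εS ≤ (∫ p : Z × ℝ, |h p.1 - p.2| ∂μhatS) + CS := hdevS
  set D := dHt H μS μT +
      min (∫ z, |fS z - fT z| ∂μS) (∫ z, |fS z - fT z| ∂μT) + (nS + nT) with hD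
  have e1 : εT = (m / (n + m)) * εT + (n / (n + m)) * εT := by
    field_simp; ring
  calc εT = (m / (n + m)) * εT + (n / (n + m)) * εT := e1
    _ ≤ (m / (n + m)) * ((∫ p : Z × ℝ, |h p.1 - p.2| ∂μhatT) + CT) +
        (n / (n + m)) * ((∫ p : Z × ℝ, |h p.1 - p.2| ∂μhatS) + CS + D) := by
        have h1 : εT ≤ (∫ p : Z × ℝ, |h p.1 - p.2| ∂μhatS) + CS + D := by
          linarith
        exact add_le_add (mul_le_mul_of_nonneg_left hT' hβ)
          (mul_le_mul_of_nonneg_left h1 hα)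
    _ = (m / (n + m)) * (∫ p : Z × ℝ, |h p.1 - p.2| ∂μhatT) +
        (n / (n + m)) * (∫ p : Z × ℝ, |h p.1 - p.2| ∂μhatS) +
        (n / (n + m)) * (dHt H μS μT +
          min (∫ z, |fS z - fT z| ∂μS) (∫ z, |fS z - fT z| ∂μT) + (nS + nT) + CS) +
        (m / (n + m)) * CT := by rw [hD]; ring
end
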